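/- For K a real compact nc convex set, an element x of the complexification K_c is complex maximal in K_c (with respect to dilations by complex isometries) if and only if it is real maximal in K_c (with respect to dilations by real isometries). -/

import Mathlib

open Matrix Filter Topology
open scoped RealInnerProductSpace ComplexOrder

noncomputable section

namespace NCC

/-! ## Matrix operations over a real module -/

def lmul {E : Type*} [AddCommMonoid E] [Module ℝ E] {m n p : ℕ}
    (a : Matrix (Fin m) (Fin n) ℝ) (x : Matrix (Fin n) (Fin p) E) :
    Matrix (Fin m) (Fin p) E :=
  Matrix.of fun i j => ∑ k, a i k • x k j

def rmulE {E : Type*} [AddCommMonoid E] [Module ℝ E] {m n p : ℕ}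
    (x : Matrix (Fin m) (Fin n) E) (a : Matrix (Fin n) (Fin p) ℝ) :
    Matrix (Fin m) (Fin p) E :=
  Matrix.of fun i j => ∑ k, a k j • x i k

/-- The compression `αᵀ x α` of `x ∈ M_n(E)` by `α ∈ M_{n,m}(ℝ)`. -/
def compress {E : Type*} [AddCommMonoid E] [Module ℝ E] {n m : ℕ}
    (α : Matrix (Fin n) (Fin m) ℝ) (x : Matrix (Fin n) (Fin n) E) :
    Matrix (Fin m) (Fin m) E :=
  lmul α.transpose (rmulE x α)

/-- A real isometry matrix: `αᵀ α = 1`. -/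
def IsIsometry {n m : ℕ} (α : Matrix (Fin n) (Fin m) ℝ) : Prop :=
  α.transpose * α = 1

/-- The direct sum `x ⊕ y` of matrices over `E`. -/
def dSum {E : Type*} [AddCommMonoid E] [Module ℝ E] {n m : ℕ}
    (x : Matrix (Fin n) (Fin n) E) (y : Matrix (Fin m) (Fin m) E) :
    Matrix (Fin (n + m)) (Fin (n + m)) E :=
  Matrix.reindex finSumFinEquiv finSumFinEquiv (Matrix.fromBlocks x 0 0 y)

/-- A real scalar matrix `p` commutes with a matrix `x` over `E`. -/
def RComm {E : Type*} [AddCommMonoid E] [Module ℝ E] {n : ℕ}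
    (p : Matrix (Fin n) (Fin n) ℝ) (x : Matrix (Fin n) (Fin n) E) : Prop :=
  lmul p x = rmulE x p

/-! ## Real nc convex sets -/

/-- A real nc convex set over the real operator space `E`, with (finite) matrix levels:
a graded family of sets closed under direct sums and isometric compressions. -/
structure NCConvexSet (E : Type*) [AddCommMonoid E] [Module ℝ E] where
  level : (n : ℕ) → Set (Matrix (Fin n) (Fin n) E)
  dSum_mem : ∀ {n m : ℕ} {x : Matrix (Fin n) (Fin n) E} {y : Matrix (Fin m) (Fin m) E},
    x ∈ level n → y ∈ level m → dSum x y ∈ level (n + m)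
  compress_mem : ∀ {n m : ℕ} (α : Matrix (Fin n) (Fin m) ℝ), IsIsometry α →
    ∀ {x : Matrix (Fin n) (Fin n) E}, x ∈ level n → compress α x ∈ level m

/-- Compactness of each level in the point-weak* topology (here: the given topology on `E`). -/
def NCConvexSet.IsCompactSet {E : Type*} [AddCommMonoid E] [Module ℝ E] [TopologicalSpace E]
    (K : NCConvexSet E) : Prop :=
  ∀ n, IsCompact (K.level n)

/-- The elements of `K` at level `m`. -/
abbrev NCConvexSet.Elem {E : Type*} [AddCommMonoid E] [Module ℝ E] (K : NCConvexSet E) (m : ℕ) :=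
  {x : Matrix (Fin m) (Fin m) E // x ∈ K.level m}

/-- `x` is maximal in `K` : every dilation of `x` is trivial. -/
def IsMaxIn {E : Type*} [AddCommMonoid E] [Module ℝ E] (K : NCConvexSet E) {n : ℕ}
    (x : Matrix (Fin n) (Fin n) E) : Prop :=
  ∀ {m : ℕ} (y : Matrix (Fin m) (Fin m) E) (α : Matrix (Fin m) (Fin n) ℝ),
    y ∈ K.level m → IsIsometry α → compress α y = x → RComm (α * α.transpose) y

/-- `x` is a pure point of `K`. -/
def IsPureIn {E : Type*} [AddCommMonoid E] [Module ℝ E] (K : NCConvexSet E) {n : ℕ}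
    (x : Matrix (Fin n) (Fin n) E) : Prop :=
  ∀ (N : ℕ) (d : Fin N → ℕ)
    (xs : ∀ i, Matrix (Fin (d i)) (Fin (d i)) E)
    (αs : ∀ i, Matrix (Fin (d i)) (Fin n) ℝ),
    (∀ i, xs i ∈ K.level (d i)) → (∀ i, αs i ≠ 0) →
    (∑ i, (αs i).transpose * αs i) = 1 →
    (∑ i, compress (αs i) (xs i)) = x →
    ∀ i, ∃ (c : ℝ) (β : Matrix (Fin (d i)) (Fin n) ℝ),
      0 < c ∧ IsIsometry β ∧ αs i = c • β ∧ compress β (xs i) = x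

/-- `x` is an extreme point of `K`. -/
def IsExtremeIn {E : Type*} [AddCommMonoid E] [Module ℝ E] (K : NCConvexSet E) {n : ℕ}
    (x : Matrix (Fin n) (Fin n) E) : Prop :=
  ∀ (N : ℕ) (d : Fin N → ℕ)
    (xs : ∀ i, Matrix (Fin (d i)) (Fin (d i)) E)
    (αs : ∀ i, Matrix (Fin (d i)) (Fin n) ℝ),
    (∀ i, xs i ∈ K.level (d i)) → (∀ i, αs i ≠ 0) →
    (∑ i, (αs i).transpose * αs i) = 1 →
    (∑ i, compress (αs i) (xs i)) = x →
    ∀ i, ∃ (c : ℝ) (β : Matrix (Fin (d i)) (Fin n) ℝ),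
      0 < c ∧ IsIsometry β ∧ αs i = c • β ∧ compress β (xs i) = x ∧
      RComm (β * β.transpose) (xs i)

/-! ## Complexification -/

/-- `c(x + iy) = [[x, -y], [y, x]]`. -/
def cMat {E : Type*} [AddCommGroup E] [Module ℝ E] {n : ℕ}
    (x y : Matrix (Fin n) (Fin n) E) : Matrix (Fin (n + n)) (Fin (n + n)) E :=
  Matrix.reindex finSumFinEquiv finSumFinEquiv (Matrix.fromBlocks x (-y) y x)

/-- A complex isometry matrix `a + ib` : `(a+ib)^*(a+ib) = 1`. -/
def IsCIsometry {n m : ℕ} (a b : Matrix (Fin n) (Fin m) ℝ) : Prop :=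
  a.transpose * a + b.transpose * b = 1 ∧ a.transpose * b - b.transpose * a = 0

/-- Complex compression `(a+ib)^* (x+iy) (a+ib)`, presented as a pair (real part, imaginary part). -/
def compressC {E : Type*} [AddCommGroup E] [Module ℝ E] {N m : ℕ}
    (a b : Matrix (Fin N) (Fin m) ℝ) (x y : Matrix (Fin N) (Fin N) E) :
    Matrix (Fin m) (Fin m) E × Matrix (Fin m) (Fin m) E :=
  (lmul a.transpose (rmulE x a - rmulE y b) + lmul b.transpose (rmulE y a + rmulE x b),
   lmul a.transpose (rmulE y a + rmulE x b) - lmul b.transpose (rmulE x a - rmulE y b))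

/-- The complex scalar matrix `pr + i·pim` commutes with `x + iy`. -/
def CCommC {E : Type*} [AddCommGroup E] [Module ℝ E] {N : ℕ}
    (pr pim : Matrix (Fin N) (Fin N) ℝ) (x y : Matrix (Fin N) (Fin N) E) : Prop :=
  (lmul pr x - lmul pim y = rmulE x pr - rmulE y pim) ∧
  (lmul pr y + lmul pim x = rmulE y pr + rmulE x pim)

/-- `x + iy ∈ K_c` is maximal with respect to dilations by complex isometries. -/
def IsCMaxInC {E : Type*} [AddCommGroup E] [Module ℝ E] (K : NCConvexSet E) {n : ℕ}
    (x y : Matrix (Fin n) (Fin n) E) : Prop :=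
  ∀ {m : ℕ} (z w : Matrix (Fin m) (Fin m) E) (a b : Matrix (Fin m) (Fin n) ℝ),
    cMat z w ∈ K.level (m + m) → IsCIsometry a b → compressC a b z w = (x, y) →
    CCommC (a * a.transpose + b * b.transpose) (b * a.transpose - a * b.transpose) z w

/-- `x + iy ∈ K_c` is maximal with respect to dilations by real isometries. -/
def IsRMaxInC {E : Type*} [AddCommGroup E] [Module ℝ E] (K : NCConvexSet E) {n : ℕ}
    (x y : Matrix (Fin n) (Fin n) E) : Prop :=
  ∀ {m : ℕ} (z w : Matrix (Fin m) (Fin m) E) (α : Matrix (Fin m) (Fin n) ℝ),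
    cMat z w ∈ K.level (m + m) → IsIsometry α → compressC α 0 z w = (x, y) →
    CCommC (α * α.transpose) 0 z w

/-- `x + iy` is a pure point of the complexification `K_c`. -/
def IsCPureInC {E : Type*} [AddCommGroup E] [Module ℝ E] (K : NCConvexSet E) {n : ℕ}
    (x y : Matrix (Fin n) (Fin n) E) : Prop :=
  ∀ (N : ℕ) (d : Fin N → ℕ)
    (xs ys : ∀ i, Matrix (Fin (d i)) (Fin (d i)) E)
    (as bs : ∀ i, Matrix (Fin (d i)) (Fin n) ℝ),
    (∀ i, cMat (xs i) (ys i) ∈ K.level (d i + d i)) →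
    (∀ i, ¬(as i = 0 ∧ bs i = 0)) →
    (∑ i, ((as i).transpose * as i + (bs i).transpose * bs i)) = 1 →
    (∑ i, ((as i).transpose * bs i - (bs i).transpose * as i)) = 0 →
    (∑ i, (compressC (as i) (bs i) (xs i) (ys i)).1) = x →
    (∑ i, (compressC (as i) (bs i) (xs i) (ys i)).2) = y →
    ∀ i, ∃ (c : ℝ) (βa βb : Matrix (Fin (d i)) (Fin n) ℝ),
      0 < c ∧ IsCIsometry βa βb ∧ as i = c • βa ∧ bs i = c • βb ∧
      compressC βa βb (xs i) (ys i) = (x, y)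

/-- `x + iy` is an extreme point of the complexification `K_c`. -/
def IsCExtremeInC {E : Type*} [AddCommGroup E] [Module ℝ E] (K : NCConvexSet E) {n : ℕ}
    (x y : Matrix (Fin n) (Fin n) E) : Prop :=
  ∀ (N : ℕ) (d : Fin N → ℕ)
    (xs ys : ∀ i, Matrix (Fin (d i)) (Fin (d i)) E)
    (as bs : ∀ i, Matrix (Fin (d i)) (Fin n) ℝ),
    (∀ i, cMat (xs i) (ys i) ∈ K.level (d i + d i)) →
    (∀ i, ¬(as i = 0 ∧ bs i = 0)) →
    (∑ i, ((as i).transpose * as i + (bs i).transpose * bs i)) = 1 →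
    (∑ i, ((as i).transpose * bs i - (bs i).transpose * as i)) = 0 →
    (∑ i, (compressC (as i) (bs i) (xs i) (ys i)).1) = x →
    (∑ i, (compressC (as i) (bs i) (xs i) (ys i)).2) = y →
    ∀ i, ∃ (c : ℝ) (βa βb : Matrix (Fin (d i)) (Fin n) ℝ),
      0 < c ∧ IsCIsometry βa βb ∧ as i = c • βa ∧ bs i = c • βb ∧
      compressC βa βb (xs i) (ys i) = (x, y) ∧
      CCommC (βa * βa.transpose + βb * βb.transpose)
        (βb * βa.transpose - βa * βb.transpose) (xs i) (ys i)

/-- `x` is complex-irreducible: every nonzero positive complex matrix commuting with `x`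
is a positive scalar multiple of the identity. -/
def CIrred {E : Type*} [AddCommGroup E] [Module ℝ E] {n : ℕ}
    (x : Matrix (Fin n) (Fin n) E) : Prop :=
  ∀ T : Matrix (Fin n) (Fin n) ℂ, T.PosSemidef → T ≠ 0 →
    RComm (T.map Complex.re) x → RComm (T.map Complex.im) x →
    ∃ c : ℝ, 0 < c ∧ T = (c : ℂ) • 1

/-- The closed nc convex hull of a graded set. -/
def closedNCHull {E' : Type*} [AddCommMonoid E'] [Module ℝ E'] [TopologicalSpace E']
    (X : ∀ m : ℕ, Set (Matrix (Fin m) (Fin m) E')) :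
    ∀ m : ℕ, Set (Matrix (Fin m) (Fin m) E') :=
  fun m => {z | ∀ L : NCConvexSet E', (∀ k, IsClosed (L.level k)) →
    (∀ k, X k ⊆ L.level k) → z ∈ L.level m}

/-- Bundled real topological vector space data (for existential statements). -/
structure RSpace where
  carrier : Type
  [grp : AddCommGroup carrier]
  [mod : Module ℝ carrier]
  [top : TopologicalSpace carrier]

attribute [instance] RSpace.grp RSpace.mod RSpace.top

end NCC
/-! ## NC functions -/

namespace NCC

/-- `1_n ⊗ U` : the amplification of a real scalar matrix. -/
def amp {n m k : ℕ} (U : Matrix (Fin m) (Fin k) ℝ) :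
    Matrix (Fin n × Fin m) (Fin n × Fin k) ℝ :=
  Matrix.of fun p q => if p.1 = q.1 then U p.2 q.2 else 0

/-- Direct sum of values of a (matrix-valued) nc function. -/
def dPair {n m k : ℕ} (A : Matrix (Fin n × Fin m) (Fin n × Fin m) ℝ)
    (B : Matrix (Fin n × Fin k) (Fin n × Fin k) ℝ) :
    Matrix (Fin n × Fin (m + k)) (Fin n × Fin (m + k)) ℝ :=
  Matrix.of fun p q =>
    Sum.elim
      (fun a => Sum.elim (fun b => A (p.1, a) (q.1, b)) (fun _ => (0 : ℝ))
        (finSumFinEquiv.symm q.2))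
      (fun a => Sum.elim (fun _ => (0 : ℝ)) (fun b => B (p.1, a) (q.1, b))
        (finSumFinEquiv.symm q.2))
      (finSumFinEquiv.symm p.2)

/-- A (bounded) nc function in `M_n(B(K))` : graded, unitarily equivariant,
respecting direct sums. -/
structure NCFun {E : Type*} [AddCommMonoid E] [Module ℝ E] (K : NCConvexSet E) (n : ℕ) where
  app : ∀ {m : ℕ}, K.Elem m → Matrix (Fin n × Fin m) (Fin n × Fin m) ℝ
  equivariant : ∀ {m : ℕ} (U : Matrix (Fin m) (Fin m) ℝ), U.transpose * U = 1 →
    U * U.transpose = 1 → ∀ (x y : K.Elem m), y.val = compress U.transpose x.val →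
    app y = amp (n := n) U * app x * amp (n := n) U.transpose
  dsum_eq : ∀ {m k : ℕ} (x : K.Elem m) (y : K.Elem k) (z : K.Elem (m + k)),
    z.val = dSum x.val y.val → app z = dPair (app x) (app y)

/-- Boundedness of an nc function (uniform bound on the operator norms of its values). -/
def NCFun.Bounded {E : Type*} [AddCommMonoid E] [Module ℝ E] {K : NCConvexSet E} {n : ℕ}
    (f : NCFun K n) : Prop :=
  ∃ C : ℝ, ∀ {m : ℕ} (x : K.Elem m) (v w : Fin n × Fin m → ℝ),
    |∑ p, ∑ q, w p * f.app x p q * v q| ≤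
      C * Real.sqrt (∑ p, v p ^ 2) * Real.sqrt (∑ p, w p ^ 2)

/-- Continuity of an nc function on each level of `K`. -/
def NCFun.ContinuousOnK {E : Type*} [AddCommMonoid E] [Module ℝ E] [TopologicalSpace E]
    {K : NCConvexSet E} {n : ℕ} (f : NCFun K n) : Prop :=
  ∀ m : ℕ, Continuous fun x : K.Elem m => f.app x

/-- Selfadjointness of an nc function. -/
def NCFun.SelfAdj {E : Type*} [AddCommMonoid E] [Module ℝ E] {K : NCConvexSet E} {n : ℕ}
    (f : NCFun K n) : Prop :=
  ∀ {m : ℕ} (x : K.Elem m), (f.app x).IsSymm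

/-- `C(K)` : the continuous bounded nc functions on `K` (scalar level). -/
def CFun {E : Type*} [AddCommMonoid E] [Module ℝ E] [TopologicalSpace E]
    (K : NCConvexSet E) : Type _ :=
  {f : NCFun K 1 // f.Bounded ∧ f.ContinuousOnK}

/-- Affine nc functions (the elements of `A(K)`). -/
def IsAffineF {E : Type*} [AddCommMonoid E] [Module ℝ E] {K : NCConvexSet E} {n : ℕ}
    (f : NCFun K n) : Prop :=
  ∀ {m k : ℕ} (α : Matrix (Fin m) (Fin k) ℝ), IsIsometry α →
    ∀ (x : K.Elem m) (y : K.Elem k), y.val = compress α x.val →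
    f.app y = (amp (n := n) α).transpose * f.app x * amp (n := n) α

/-- Positivity of a matrix of elements of `C(K)` : pointwise positive semidefiniteness. -/
def PosMatC {E : Type*} [AddCommMonoid E] [Module ℝ E] [TopologicalSpace E]
    {K : NCConvexSet E} {k : ℕ} (G : Matrix (Fin k) (Fin k) (CFun K)) : Prop :=
  ∀ {m : ℕ} (x : K.Elem m),
    (Matrix.of fun p q : Fin k × (Fin 1 × Fin m) =>
      ((G p.1 q.1).val.app x) p.2 q.2).PosSemidef

/-- A unital completely positive map `μ : C(K) → M_d(ℝ)`. -/
structure IsUcpC {E : Type*} [AddCommMonoid E] [Module ℝ E] [TopologicalSpace E]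
    {K : NCConvexSet E} {d : ℕ} (μ : CFun K → Matrix (Fin d) (Fin d) ℝ) : Prop where
  map_add : ∀ f g h : CFun K,
    (∀ {m : ℕ} (x : K.Elem m), h.val.app x = f.val.app x + g.val.app x) → μ h = μ f + μ g
  map_smul : ∀ (c : ℝ) (f g : CFun K),
    (∀ {m : ℕ} (x : K.Elem m), g.val.app x = c • f.val.app x) → μ g = c • μ f
  unital : ∀ f : CFun K, (∀ {m : ℕ} (x : K.Elem m), f.val.app x = 1) → μ f = 1
  cp : ∀ (k : ℕ) (G : Matrix (Fin k) (Fin k) (CFun K)), PosMatC G →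
    (Matrix.of fun p q : Fin k × Fin d => μ (G p.1 q.1) p.2 q.2).PosSemidef

/-- Strip the trivial `Fin 1` factor from the value of a scalar-level nc function. -/
def sqMat {m : ℕ} (A : Matrix (Fin 1 × Fin m) (Fin 1 × Fin m) ℝ) :
    Matrix (Fin m) (Fin m) ℝ :=
  Matrix.of fun p q => A (0, p) (0, q)

/-- The point evaluation `δ_x : C(K) → M_m(ℝ)`. -/
def deltaAt {E : Type*} [AddCommMonoid E] [Module ℝ E] [TopologicalSpace E]
    {K : NCConvexSet E} {m : ℕ} (x : K.Elem m) :
    CFun K → Matrix (Fin m) (Fin m) ℝ :=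
  fun f => sqMat (f.val.app x)

/-- `μ` has barycenter `x` : `μ` restricted to `A(K)` is (evaluation at) `x`. -/
def HasBarycenter {E : Type*} [AddCommMonoid E] [Module ℝ E] [TopologicalSpace E]
    {K : NCConvexSet E} {d : ℕ} (μ : CFun K → Matrix (Fin d) (Fin d) ℝ)
    (x : K.Elem d) : Prop :=
  ∀ f : CFun K, IsAffineF f.val → μ f = deltaAt x f

/-- View a map `C(K) → M_d(ℝ)` as a `d × d` matrix over the dual-type `C(K) → ℝ`. -/
def toMatFun {E : Type*} [AddCommMonoid E] [Module ℝ E] [TopologicalSpace E]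
    {K : NCConvexSet E} {d : ℕ} (μ : CFun K → Matrix (Fin d) (Fin d) ℝ) :
    Matrix (Fin d) (Fin d) (CFun K → ℝ) :=
  Matrix.of fun i j f => μ f i j

/-! ## Epigraphs, convexity, lower semicontinuity of nc functions -/

/-- The epigraph of a selfadjoint nc function. -/
def RealEpi {E : Type*} [AddCommGroup E] [Module ℝ E] {K : NCConvexSet E} {n : ℕ}
    (f : NCFun K n) (m : ℕ) :
    Set (Matrix (Fin m) (Fin m) E × Matrix (Fin n × Fin m) (Fin n × Fin m) ℝ) :=
  {z | ∃ h : z.1 ∈ K.level m, z.2.IsSymm ∧ (z.2 - f.app ⟨z.1, h⟩).PosSemidef}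

/-- `f` is nc convex: its epigraph is an nc convex set. -/
def IsConvexF {E : Type*} [AddCommGroup E] [Module ℝ E] {K : NCConvexSet E} {n : ℕ}
    (f : NCFun K n) : Prop :=
  (∀ {m k : ℕ} (z : Matrix (Fin m) (Fin m) E × Matrix (Fin n × Fin m) (Fin n × Fin m) ℝ)
      (w : Matrix (Fin k) (Fin k) E × Matrix (Fin n × Fin k) (Fin n × Fin k) ℝ),
    z ∈ RealEpi f m → w ∈ RealEpi f k →
    (dSum z.1 w.1, dPair z.2 w.2) ∈ RealEpi f (m + k)) ∧
  (∀ {m k : ℕ} (γ : Matrix (Fin m) (Fin k) ℝ), IsIsometry γ →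
    ∀ z ∈ RealEpi f m,
      (compress γ z.1, (amp (n := n) γ).transpose * z.2 * amp (n := n) γ) ∈ RealEpi f k)

/-- `f` is lower semicontinuous: its epigraph is closed. -/
def IsLscF {E : Type*} [AddCommGroup E] [Module ℝ E] [TopologicalSpace E]
    {K : NCConvexSet E} {n : ℕ} (f : NCFun K n) : Prop :=
  ∀ m, IsClosed (RealEpi f m)

/-! ## The complexification of nc functions -/

/-- The elements of the complexification `K_c` at level `m`, as pairs `x + iy`. -/
def KcElem {E : Type*} [AddCommGroup E] [Module ℝ E] (K : NCConvexSet E) (m : ℕ) :=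
  {p : Matrix (Fin m) (Fin m) E × Matrix (Fin m) (Fin m) E // cMat p.1 p.2 ∈ K.level (m + m)}

def inL {m : ℕ} (p : Fin m) : Fin (m + m) := finSumFinEquiv (Sum.inl p)
def inR {m : ℕ} (p : Fin m) : Fin (m + m) := finSumFinEquiv (Sum.inr p)

/-- Real part of `u_m^* A u_m` for `A` a value at `c(x,y)`. -/
def fcReMat {n m : ℕ} (A : Matrix (Fin n × Fin (m + m)) (Fin n × Fin (m + m)) ℝ) :
    Matrix (Fin n × Fin m) (Fin n × Fin m) ℝ :=
  Matrix.of fun a b =>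
    (A (a.1, inL a.2) (b.1, inL b.2) + A (a.1, inR a.2) (b.1, inR b.2)) / 2

/-- Imaginary part of `u_m^* A u_m` for `A` a value at `c(x,y)`. -/
def fcImMat {n m : ℕ} (A : Matrix (Fin n × Fin (m + m)) (Fin n × Fin (m + m)) ℝ) :
    Matrix (Fin n × Fin m) (Fin n × Fin m) ℝ :=
  Matrix.of fun a b =>
    (A (a.1, inR a.2) (b.1, inL b.2) - A (a.1, inL a.2) (b.1, inR b.2)) / 2

/-- Real part of the complexification `f_c(x+iy) = u^* f(c(x,y)) u`. -/
def fcRe {E : Type*} [AddCommGroup E] [Module ℝ E] {K : NCConvexSet E} {n : ℕ}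
    (f : NCFun K n) {m : ℕ} (p : KcElem K m) :
    Matrix (Fin n × Fin m) (Fin n × Fin m) ℝ :=
  fcReMat (f.app ⟨cMat p.val.1 p.val.2, p.property⟩)

/-- Imaginary part of the complexification `f_c(x+iy) = u^* f(c(x,y)) u`. -/
def fcIm {E : Type*} [AddCommGroup E] [Module ℝ E] {K : NCConvexSet E} {n : ℕ}
    (f : NCFun K n) {m : ℕ} (p : KcElem K m) :
    Matrix (Fin n × Fin m) (Fin n × Fin m) ℝ :=
  fcImMat (f.app ⟨cMat p.val.1 p.val.2, p.property⟩)

/-- Positive semidefiniteness of the complex matrix `R + iI`, via its real picture. -/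
def PosSemidefC {ι : Type*} [Fintype ι] [DecidableEq ι] (R I : Matrix ι ι ℝ) : Prop :=
  (Matrix.fromBlocks R (-I) I R).PosSemidef

/-- Complex compression of a complex matrix value `(R, I)` by the complex
matrix `1_n ⊗ (a + ib)`. -/
def cpCompress {n m k : ℕ} (a b : Matrix (Fin m) (Fin k) ℝ)
    (R I : Matrix (Fin n × Fin m) (Fin n × Fin m) ℝ) :
    Matrix (Fin n × Fin k) (Fin n × Fin k) ℝ × Matrix (Fin n × Fin k) (Fin n × Fin k) ℝ :=
  ((amp (n := n) a).transpose * (R * amp (n := n) a - I * amp (n := n) b) +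
      (amp (n := n) b).transpose * (I * amp (n := n) a + R * amp (n := n) b),
   (amp (n := n) a).transpose * (I * amp (n := n) a + R * amp (n := n) b) -
      (amp (n := n) b).transpose * (R * amp (n := n) a - I * amp (n := n) b))

/-- The epigraph of the complexification `f_c` on `K_c`. -/
def CEpi {E : Type*} [AddCommGroup E] [Module ℝ E] {K : NCConvexSet E} {n : ℕ}
    (f : NCFun K n) (m : ℕ) :
    Set ((Matrix (Fin m) (Fin m) E × Matrix (Fin m) (Fin m) E) ×
      (Matrix (Fin n × Fin m) (Fin n × Fin m) ℝ × Matrix (Fin n × Fin m) (Fin n × Fin m) ℝ)) :=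
  {z | ∃ h : cMat z.1.1 z.1.2 ∈ K.level (m + m),
    z.2.1.IsSymm ∧ z.2.2.transpose = -z.2.2 ∧
    PosSemidefC (z.2.1 - fcRe f ⟨z.1, h⟩) (z.2.2 - fcIm f ⟨z.1, h⟩)}

/-- `f_c` is complex nc convex: its epigraph is a complex nc convex set. -/
def IsCConvexF {E : Type*} [AddCommGroup E] [Module ℝ E] {K : NCConvexSet E} {n : ℕ}
    (f : NCFun K n) : Prop :=
  (∀ {m k : ℕ}
      (z : (Matrix (Fin m) (Fin m) E × Matrix (Fin m) (Fin m) E) ×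
        (Matrix (Fin n × Fin m) (Fin n × Fin m) ℝ × Matrix (Fin n × Fin m) (Fin n × Fin m) ℝ))
      (w : (Matrix (Fin k) (Fin k) E × Matrix (Fin k) (Fin k) E) ×
        (Matrix (Fin n × Fin k) (Fin n × Fin k) ℝ × Matrix (Fin n × Fin k) (Fin n × Fin k) ℝ)),
    z ∈ CEpi f m → w ∈ CEpi f k →
    ((dSum z.1.1 w.1.1, dSum z.1.2 w.1.2), (dPair z.2.1 w.2.1, dPair z.2.2 w.2.2))
      ∈ CEpi f (m + k)) ∧
  (∀ {m k : ℕ} (a b : Matrix (Fin m) (Fin k) ℝ), IsCIsometry a b →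
    ∀ z ∈ CEpi f m,
      (compressC a b z.1.1 z.1.2, cpCompress a b z.2.1 z.2.2) ∈ CEpi f k)

/-- `f_c` is complex lower semicontinuous: its epigraph is closed. -/
def IsCLscF {E : Type*} [AddCommGroup E] [Module ℝ E] [TopologicalSpace E]
    {K : NCConvexSet E} {n : ℕ} (f : NCFun K n) : Prop :=
  ∀ m, IsClosed (CEpi f m)

end NCC
/-! ## Multivalued nc functions and convex envelopes -/

namespace NCC

/-- A bounded selfadjoint multivalued nc function `F : K → M_n(𝓜(ℝ))`. -/
structure MVFun {E : Type*} [AddCommGroup E] [Module ℝ E] (K : NCConvexSet E) (n : ℕ) where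
  app : ∀ {m : ℕ}, K.Elem m → Set (Matrix (Fin n × Fin m) (Fin n × Fin m) ℝ)
  symm_mem : ∀ {m : ℕ} (x : K.Elem m) {α}, α ∈ app x → α.IsSymm
  upward : ∀ {m : ℕ} (x : K.Elem m) {α β}, α ∈ app x → β.IsSymm →
    (β - α).PosSemidef → β ∈ app x
  directed : ∀ {m : ℕ} (x : K.Elem m) {α β}, α ∈ app x → β ∈ app x →
    ∃ γ ∈ app x, (γ - α).PosSemidef ∧ (γ - β).PosSemidef
  equivariant : ∀ {m : ℕ} (U : Matrix (Fin m) (Fin m) ℝ), U.transpose * U = 1 →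
    U * U.transpose = 1 → ∀ (x y : K.Elem m), y.val = compress U.transpose x.val →
    app y = (fun A => amp (n := n) U * A * amp (n := n) U.transpose) '' app x
  dsum_mem : ∀ {m k : ℕ} (x : K.Elem m) (y : K.Elem k) (z : K.Elem (m + k)),
    z.val = dSum x.val y.val → ∀ {A B}, A ∈ app x → B ∈ app y → dPair A B ∈ app z
  bounded : ∃ lam : ℝ, 0 < lam ∧ ∀ {m : ℕ} (x : K.Elem m) {β}, β ∈ app x →
    ∃ α ∈ app x, (β - α).PosSemidef ∧
      (lam • (1 : Matrix (Fin n × Fin m) (Fin n × Fin m) ℝ) - α).PosSemidef ∧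
      (α + lam • (1 : Matrix (Fin n × Fin m) (Fin n × Fin m) ℝ)).PosSemidef

/-- The graph of a multivalued nc function. -/
def MVGraph {E : Type*} [AddCommGroup E] [Module ℝ E] {K : NCConvexSet E} {n : ℕ}
    (F : MVFun K n) (m : ℕ) :
    Set (Matrix (Fin m) (Fin m) E × Matrix (Fin n × Fin m) (Fin n × Fin m) ℝ) :=
  {z | ∃ h : z.1 ∈ K.level m, z.2 ∈ F.app ⟨z.1, h⟩}

/-- The closed nc convex hull of a graded family of graphs/epigraphs. -/
def pairHull {E : Type*} [AddCommGroup E] [Module ℝ E] [TopologicalSpace E] {n : ℕ}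
    (X : ∀ m : ℕ, Set (Matrix (Fin m) (Fin m) E × Matrix (Fin n × Fin m) (Fin n × Fin m) ℝ)) :
    ∀ m : ℕ, Set (Matrix (Fin m) (Fin m) E × Matrix (Fin n × Fin m) (Fin n × Fin m) ℝ) :=
  fun m => {z | ∀ Y : ∀ k : ℕ,
      Set (Matrix (Fin k) (Fin k) E × Matrix (Fin n × Fin k) (Fin n × Fin k) ℝ),
    (∀ k, IsClosed (Y k)) →
    (∀ {k l : ℕ} (a : Matrix (Fin k) (Fin k) E × Matrix (Fin n × Fin k) (Fin n × Fin k) ℝ)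
        (b : Matrix (Fin l) (Fin l) E × Matrix (Fin n × Fin l) (Fin n × Fin l) ℝ),
      a ∈ Y k → b ∈ Y l → (dSum a.1 b.1, dPair a.2 b.2) ∈ Y (k + l)) →
    (∀ {k l : ℕ} (γ : Matrix (Fin k) (Fin l) ℝ), IsIsometry γ →
      ∀ a ∈ Y k, (compress γ a.1, (amp (n := n) γ).transpose * a.2 * amp (n := n) γ) ∈ Y l) →
    (∀ k, X k ⊆ Y k) → z ∈ Y m}

/-- The value set of the complexification `F_c(x + iy) = u^* F(c(x,y)) u`. -/
def FcSet {E : Type*} [AddCommGroup E] [Module ℝ E] {K : NCConvexSet E} {n : ℕ}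
    (F : MVFun K n) {m : ℕ} (p : KcElem K m) :
    Set (Matrix (Fin n × Fin m) (Fin n × Fin m) ℝ × Matrix (Fin n × Fin m) (Fin n × Fin m) ℝ) :=
  {RI | ∃ A ∈ F.app ⟨cMat p.val.1 p.val.2, p.property⟩, RI = (fcReMat A, fcImMat A)}

/-- The graph of a complex multivalued function on `K_c`, given as a set-valued assignment. -/
def CMVGraph {E : Type*} [AddCommGroup E] [Module ℝ E] {K : NCConvexSet E} {n : ℕ}
    (G : ∀ m : ℕ, KcElem K m →
      Set (Matrix (Fin n × Fin m) (Fin n × Fin m) ℝ × Matrix (Fin n × Fin m) (Fin n × Fin m) ℝ))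
    (m : ℕ) :
    Set ((Matrix (Fin m) (Fin m) E × Matrix (Fin m) (Fin m) E) ×
      (Matrix (Fin n × Fin m) (Fin n × Fin m) ℝ × Matrix (Fin n × Fin m) (Fin n × Fin m) ℝ)) :=
  {z | ∃ h : cMat z.1.1 z.1.2 ∈ K.level (m + m), z.2 ∈ G m ⟨z.1, h⟩}

/-- The closed complex nc convex hull of a graded family of complex graphs. -/
def cPairHull {E : Type*} [AddCommGroup E] [Module ℝ E] [TopologicalSpace E] {n : ℕ}
    (X : ∀ m : ℕ, Set ((Matrix (Fin m) (Fin m) E × Matrix (Fin m) (Fin m) E) ×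
      (Matrix (Fin n × Fin m) (Fin n × Fin m) ℝ × Matrix (Fin n × Fin m) (Fin n × Fin m) ℝ))) :
    ∀ m : ℕ, Set ((Matrix (Fin m) (Fin m) E × Matrix (Fin m) (Fin m) E) ×
      (Matrix (Fin n × Fin m) (Fin n × Fin m) ℝ × Matrix (Fin n × Fin m) (Fin n × Fin m) ℝ)) :=
  fun m => {z | ∀ Y : ∀ k : ℕ,
      Set ((Matrix (Fin k) (Fin k) E × Matrix (Fin k) (Fin k) E) ×
        (Matrix (Fin n × Fin k) (Fin n × Fin k) ℝ × Matrix (Fin n × Fin k) (Fin n × Fin k) ℝ)),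
    (∀ k, IsClosed (Y k)) →
    (∀ {k l : ℕ}
        (a : (Matrix (Fin k) (Fin k) E × Matrix (Fin k) (Fin k) E) ×
          (Matrix (Fin n × Fin k) (Fin n × Fin k) ℝ × Matrix (Fin n × Fin k) (Fin n × Fin k) ℝ))
        (b : (Matrix (Fin l) (Fin l) E × Matrix (Fin l) (Fin l) E) ×
          (Matrix (Fin n × Fin l) (Fin n × Fin l) ℝ × Matrix (Fin n × Fin l) (Fin n × Fin l) ℝ)),
      a ∈ Y k → b ∈ Y l →
      ((dSum a.1.1 b.1.1, dSum a.1.2 b.1.2), (dPair a.2.1 b.2.1, dPair a.2.2 b.2.2))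
        ∈ Y (k + l)) →
    (∀ {k l : ℕ} (γa γb : Matrix (Fin k) (Fin l) ℝ), IsCIsometry γa γb →
      ∀ a ∈ Y k, (compressC γa γb a.1.1 a.1.2, cpCompress γa γb a.2.1 a.2.2) ∈ Y l) →
    (∀ k, X k ⊆ Y k) → z ∈ Y m}

end NCC
/-! ## Real Hilbert spaces, operator systems and ucp maps -/

namespace NCC

/-- Bundled real Hilbert space. -/
structure HilbertR where
  carrier : Type
  [nacg : NormedAddCommGroup carrier]
  [ipr : InnerProductSpace ℝ carrier]
  [cs : CompleteSpace carrier]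

attribute [instance] HilbertR.nacg HilbertR.ipr HilbertR.cs

/-- Bundled compact Hausdorff space. -/
structure CompactT2 where
  carrier : Type
  [ts : TopologicalSpace carrier]
  [cpt : CompactSpace carrier]
  [t2 : T2Space carrier]

attribute [instance] CompactT2.ts CompactT2.cpt CompactT2.t2

/-- The real inner product. -/
def rip {H : Type*} [NormedAddCommGroup H] [InnerProductSpace ℝ H] (x y : H) : ℝ :=
  inner ℝ x y

/-- Positivity of a matrix of Hilbert space operators. -/
def OpMatPos {H : Type*} [NormedAddCommGroup H] [InnerProductSpace ℝ H] {k : ℕ}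
    (T : Matrix (Fin k) (Fin k) (H →L[ℝ] H)) : Prop :=
  (∀ (i j : Fin k) (ξ η : H), rip (T i j ξ) (η) = rip (ξ) (T j i η)) ∧
  ∀ v : Fin k → H, 0 ≤ ∑ i, ∑ j, rip (T i j (v j)) (v i)

/-- An isometry between real inner product spaces. -/
def IsIsometryOp {H W : Type*} [NormedAddCommGroup H] [InnerProductSpace ℝ H]
    [NormedAddCommGroup W] [InnerProductSpace ℝ W] (ι : H →L[ℝ] W) : Prop :=
  ∀ ξ η : H, rip (ι ξ) (ι η) = rip (ξ) (η)

section OS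

variable {H : Type*} [NormedAddCommGroup H] [InnerProductSpace ℝ H] [CompleteSpace H]

/-- A unital completely positive map on a (concrete) real operator system `V ⊆ B(H)`. -/
def IsUcpOS (V : Submodule ℝ (H →L[ℝ] H)) {W : Type*} [NormedAddCommGroup W]
    [InnerProductSpace ℝ W] [CompleteSpace W] (φ : V → (W →L[ℝ] W)) : Prop :=
  (∀ u v : V, φ (u + v) = φ u + φ v) ∧
  (∀ (c : ℝ) (v : V), φ (c • v) = c • φ v) ∧
  (∀ v : V, (v : H →L[ℝ] H) = 1 → φ v = 1) ∧
  (∀ (k : ℕ) (T : Matrix (Fin k) (Fin k) V),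
    OpMatPos (Matrix.of fun i j => (T i j : H →L[ℝ] H)) →
    OpMatPos (Matrix.of fun i j => φ (T i j)))

/-- `ψ` (on `L`) dilates `φ` (on `W`) via the isometry `ι : W → L`. -/
def DilatesOS {V : Submodule ℝ (H →L[ℝ] H)} {W L : Type*}
    [NormedAddCommGroup W] [InnerProductSpace ℝ W] [CompleteSpace W]
    [NormedAddCommGroup L] [InnerProductSpace ℝ L] [CompleteSpace L]
    (φ : V → (W →L[ℝ] W)) (ψ : V → (L →L[ℝ] L)) (ι : W →L[ℝ] L) : Prop :=
  IsIsometryOp ι ∧ ∀ (v : V) (ξ η : W), rip (ψ v (ι ξ)) (ι η) = rip (φ v ξ) (η)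

/-- `φ` is a maximal ucp map: every dilation of it is trivial. -/
def IsMaximalOS (V : Submodule ℝ (H →L[ℝ] H)) {W : Type*}
    [NormedAddCommGroup W] [InnerProductSpace ℝ W] [CompleteSpace W]
    (φ : V → (W →L[ℝ] W)) : Prop :=
  ∀ (L : HilbertR) (ψ : V → (L.carrier →L[ℝ] L.carrier)) (ι : W →L[ℝ] L.carrier),
    IsUcpOS V ψ → DilatesOS φ ψ ι → ∀ v : V,
      Commute (ψ v) (ι.comp (ContinuousLinearMap.adjoint ι))

/-- `φ` is a pure ucp map on the operator system `V`. -/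
def IsPureOS (V : Submodule ℝ (H →L[ℝ] H)) {W : Type*}
    [NormedAddCommGroup W] [InnerProductSpace ℝ W] [CompleteSpace W]
    (φ : V → (W →L[ℝ] W)) : Prop :=
  ∀ (N : ℕ) (Ls : Fin N → HilbertR)
    (ψs : ∀ i, V → ((Ls i).carrier →L[ℝ] (Ls i).carrier))
    (ιs : ∀ i, W →L[ℝ] (Ls i).carrier),
    (∀ i, IsUcpOS V (ψs i)) → (∀ i, ιs i ≠ 0) →
    (∑ i, (ContinuousLinearMap.adjoint (ιs i)).comp (ιs i)) = 1 →
    (∀ v : V, φ v = ∑ i, (ContinuousLinearMap.adjoint (ιs i)).comp ((ψs i v).comp (ιs i))) →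
    ∀ i, ∃ (c : ℝ) (β : W →L[ℝ] (Ls i).carrier), 0 < c ∧ IsIsometryOp β ∧
      ιs i = c • β ∧
      ∀ v : V, φ v = (ContinuousLinearMap.adjoint β).comp ((ψs i v).comp β)

/-- `φ` is an extreme ucp map on the operator system `V`. -/
def IsExtremeOS (V : Submodule ℝ (H →L[ℝ] H)) {W : Type*}
    [NormedAddCommGroup W] [InnerProductSpace ℝ W] [CompleteSpace W]
    (φ : V → (W →L[ℝ] W)) : Prop :=
  ∀ (N : ℕ) (Ls : Fin N → HilbertR)
    (ψs : ∀ i, V → ((Ls i).carrier →L[ℝ] (Ls i).carrier))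
    (ιs : ∀ i, W →L[ℝ] (Ls i).carrier),
    (∀ i, IsUcpOS V (ψs i)) → (∀ i, ιs i ≠ 0) →
    (∑ i, (ContinuousLinearMap.adjoint (ιs i)).comp (ιs i)) = 1 →
    (∀ v : V, φ v = ∑ i, (ContinuousLinearMap.adjoint (ιs i)).comp ((ψs i v).comp (ιs i))) →
    ∀ i, ∃ (c : ℝ) (β : W →L[ℝ] (Ls i).carrier), 0 < c ∧ IsIsometryOp β ∧
      ιs i = c • β ∧
      (∀ v : V, φ v = (ContinuousLinearMap.adjoint β).comp ((ψs i v).comp β)) ∧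
      ∀ v : V, Commute (ψs i v) (β.comp (ContinuousLinearMap.adjoint β))

end OS

section CA

variable (A : Type*) [NormedRing A] [StarRing A] [CStarRing A] [NormedAlgebra ℝ A]
  [CompleteSpace A] [StarModule ℝ A]

/-- Positivity of a matrix over a real C*-algebra. -/
def AMatPos {k : ℕ} (M : Matrix (Fin k) (Fin k) A) : Prop :=
  ∃ b : Matrix (Fin k) (Fin k) A, M = star b * b

/-- A unital completely positive map on the real C*-algebra `A`. -/
def IsUcpCA {W : Type*} [NormedAddCommGroup W] [InnerProductSpace ℝ W] [CompleteSpace W]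
    (φ : A → (W →L[ℝ] W)) : Prop :=
  (∀ a b : A, φ (a + b) = φ a + φ b) ∧
  (∀ (c : ℝ) (a : A), φ (c • a) = c • φ a) ∧
  φ 1 = 1 ∧
  ∀ (k : ℕ) (M : Matrix (Fin k) (Fin k) A), AMatPos A M →
    OpMatPos (Matrix.of fun i j => φ (M i j))

/-- A unital *-representation of `A` on a real Hilbert space. -/
def IsStarRepA {W : Type*} [NormedAddCommGroup W] [InnerProductSpace ℝ W] [CompleteSpace W]
    (π : A → (W →L[ℝ] W)) : Prop :=
  (∀ a b : A, π (a + b) = π a + π b) ∧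
  (∀ (c : ℝ) (a : A), π (c • a) = c • π a) ∧
  π 1 = 1 ∧
  (∀ a b : A, π (a * b) = (π a).comp (π b)) ∧
  (∀ a : A, π (star a) = star (π a))

/-- Irreducibility: the selfadjoint part of the commutant is trivial. -/
def IsIrredA {W : Type*} [NormedAddCommGroup W] [InnerProductSpace ℝ W] [CompleteSpace W]
    (π : A → (W →L[ℝ] W)) : Prop :=
  ∀ T : W →L[ℝ] W, IsSelfAdjoint T → (∀ a : A, Commute T (π a)) →
    ∃ c : ℝ, T = c • (1 : W →L[ℝ] W)

/-- `ψ` dilates `φ` via the isometry `ι` (C*-algebra version). -/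
def DilatesCA {W L : Type*}
    [NormedAddCommGroup W] [InnerProductSpace ℝ W] [CompleteSpace W]
    [NormedAddCommGroup L] [InnerProductSpace ℝ L] [CompleteSpace L]
    (φ : A → (W →L[ℝ] W)) (ψ : A → (L →L[ℝ] L)) (ι : W →L[ℝ] L) : Prop :=
  IsIsometryOp ι ∧ ∀ (a : A) (ξ η : W), rip (ψ a (ι ξ)) (ι η) = rip (φ a ξ) (η)

/-- `φ` is a maximal ucp map on the C*-algebra `A`. -/
def IsMaximalCA {W : Type*} [NormedAddCommGroup W] [InnerProductSpace ℝ W] [CompleteSpace W]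
    (φ : A → (W →L[ℝ] W)) : Prop :=
  ∀ (L : HilbertR) (ψ : A → (L.carrier →L[ℝ] L.carrier)) (ι : W →L[ℝ] L.carrier),
    IsUcpCA A ψ → DilatesCA A φ ψ ι → ∀ a : A,
      Commute (ψ a) (ι.comp (ContinuousLinearMap.adjoint ι))

/-- `φ` is a pure ucp map on the C*-algebra `A`. -/
def IsPureCA {W : Type*} [NormedAddCommGroup W] [InnerProductSpace ℝ W] [CompleteSpace W]
    (φ : A → (W →L[ℝ] W)) : Prop :=
  ∀ (N : ℕ) (Ls : Fin N → HilbertR)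
    (ψs : ∀ i, A → ((Ls i).carrier →L[ℝ] (Ls i).carrier))
    (ιs : ∀ i, W →L[ℝ] (Ls i).carrier),
    (∀ i, IsUcpCA A (ψs i)) → (∀ i, ιs i ≠ 0) →
    (∑ i, (ContinuousLinearMap.adjoint (ιs i)).comp (ιs i)) = 1 →
    (∀ a : A, φ a = ∑ i, (ContinuousLinearMap.adjoint (ιs i)).comp ((ψs i a).comp (ιs i))) →
    ∀ i, ∃ (c : ℝ) (β : W →L[ℝ] (Ls i).carrier), 0 < c ∧ IsIsometryOp β ∧
      ιs i = c • β ∧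
      ∀ a : A, φ a = (ContinuousLinearMap.adjoint β).comp ((ψs i a).comp β)

/-- `φ` is an extreme ucp map on the C*-algebra `A`. -/
def IsExtremeCA {W : Type*} [NormedAddCommGroup W] [InnerProductSpace ℝ W] [CompleteSpace W]
    (φ : A → (W →L[ℝ] W)) : Prop :=
  ∀ (N : ℕ) (Ls : Fin N → HilbertR)
    (ψs : ∀ i, A → ((Ls i).carrier →L[ℝ] (Ls i).carrier))
    (ιs : ∀ i, W →L[ℝ] (Ls i).carrier),
    (∀ i, IsUcpCA A (ψs i)) → (∀ i, ιs i ≠ 0) →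
    (∑ i, (ContinuousLinearMap.adjoint (ιs i)).comp (ιs i)) = 1 →
    (∀ a : A, φ a = ∑ i, (ContinuousLinearMap.adjoint (ιs i)).comp ((ψs i a).comp (ιs i))) →
    ∀ i, ∃ (c : ℝ) (β : W →L[ℝ] (Ls i).carrier), 0 < c ∧ IsIsometryOp β ∧
      ιs i = c • β ∧
      (∀ a : A, φ a = (ContinuousLinearMap.adjoint β).comp ((ψs i a).comp β)) ∧
      ∀ a : A, Commute (ψs i a) (β.comp (ContinuousLinearMap.adjoint β))

end CA

/-- The operator norm of a matrix of Hilbert space operators, described via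
inner products against pairs of unit vectors. -/
def blockNorm {H : Type*} [NormedAddCommGroup H] [InnerProductSpace ℝ H] {k : ℕ}
    (T : Matrix (Fin k) (Fin k) (H →L[ℝ] H)) : ℝ :=
  sSup {r : ℝ | ∃ v w : (Fin k → H), (∑ i, ‖v i‖ ^ 2) ≤ 1 ∧ (∑ i, ‖w i‖ ^ 2) ≤ 1 ∧
    r = |∑ i, ∑ j, rip (T i j (v j)) (w i)|}

end NCC

/-!
A complex isometry `γ = a + i b : ℂⁿ → ℂᵐ` factors as `γ = S α` with `S` a complex unitary and `α`
the real isometry onto the first `n` coordinates. So a complex dilation `z + i w` of `x + i y`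
turns into the real dilation `S* (z + i w) S` of `x + i y`, which lies in `K_c` again because `K_c`
is closed under complex isometric compressions (through `c(S)`, a real isometry). Real maximality
makes `α α*` commute with `S* (z + i w) S`, and conjugating back by `S` shows that
`γ γ* = S α α* S*` commutes with `z + i w`.
-/

namespace NCC

section ComplexMatrices

def complexMat {k l : ℕ} (a b : Matrix (Fin k) (Fin l) ℝ) : Matrix (Fin k) (Fin l) ℂ :=
  Matrix.of fun i j => ⟨a i j, b i j⟩

theorem complexMat_mul {k l p : ℕ} (a b : Matrix (Fin k) (Fin l) ℝ)
    (c d : Matrix (Fin l) (Fin p) ℝ) :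
    complexMat a b * complexMat c d = complexMat (a * c - b * d) (a * d + b * c) := by
  ext i j
  simp [complexMat, Matrix.mul_apply, Complex.ext_iff, Finset.sum_sub_distrib,
    Finset.sum_add_distrib]

theorem complexMat_conjTranspose {k l : ℕ} (a b : Matrix (Fin k) (Fin l) ℝ) :
    (complexMat a b)ᴴ = complexMat aᵀ (-bᵀ) := by
  ext i j
  simp [complexMat, Matrix.conjTranspose_apply, Complex.ext_iff]

theorem complexMat_eq_one {k : ℕ} {a b : Matrix (Fin k) (Fin k) ℝ} :
    complexMat a b = 1 ↔ a = 1 ∧ b = 0 := by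
  simp only [complexMat, ← Matrix.ext_iff, Matrix.of_apply, Complex.ext_iff, Matrix.one_apply,
    Matrix.zero_apply, apply_ite Complex.re, apply_ite Complex.im, Complex.one_re,
    Complex.one_im, Complex.zero_re, Complex.zero_im, ite_self, forall_and]

theorem complexMat_inj {k l : ℕ} {a b c d : Matrix (Fin k) (Fin l) ℝ} :
    complexMat a b = complexMat c d ↔ a = c ∧ b = d := by
  simp only [complexMat, ← Matrix.ext_iff, Matrix.of_apply, Complex.ext_iff, forall_and]

theorem complexMat_map_re_map_im {k l : ℕ} (S : Matrix (Fin k) (Fin l) ℂ) :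
    complexMat (S.map Complex.re) (S.map Complex.im) = S := rfl

theorem complexMat_zero_right {k l : ℕ} (a : Matrix (Fin k) (Fin l) ℝ) :
    complexMat a 0 = a.map Complex.ofReal := rfl

theorem isCIsometry_iff {m n : ℕ} (a b : Matrix (Fin m) (Fin n) ℝ) :
    IsCIsometry a b ↔ (complexMat a b)ᴴ * complexMat a b = 1 := by
  simp only [IsCIsometry, complexMat_conjTranspose, complexMat_mul, complexMat_eq_one,
    Matrix.neg_mul, sub_neg_eq_add, ← sub_eq_add_neg]

theorem isCIsometry_zero_iff {m n : ℕ} {α : Matrix (Fin m) (Fin n) ℝ} :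
    IsCIsometry α 0 ↔ IsIsometry α := by
  simp [IsCIsometry, IsIsometry]

def pairMat {α : Type*} {k l : ℕ} (z w : Matrix (Fin k) (Fin l) α) :
    Matrix (Fin k) (Fin l) (α × α) :=
  Matrix.of fun i j => (z i j, w i j)

theorem pairMat_inj {α : Type*} {k l : ℕ} {z w z' w' : Matrix (Fin k) (Fin l) α} :
    pairMat z w = pairMat z' w' ↔ z = z' ∧ w = w' := by
  simp only [pairMat, ← Matrix.ext_iff, Matrix.of_apply, Prod.mk.injEq, forall_and]

end ComplexMatrices

section ComplexPairs

variable {E : Type*} [AddCommGroup E] [Module ℝ E]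

/-- A pair `(z, w)` stands for `z + i w`. This is only a local instance: for a complex
module `E` it would disagree with the componentwise action on `E × E`. -/
abbrev pairSMul : SMul ℂ (E × E) :=
  ⟨fun c p => (c.re • p.1 - c.im • p.2, c.im • p.1 + c.re • p.2)⟩

attribute [local instance] pairSMul

theorem pair_smul_def (c : ℂ) (p : E × E) :
    c • p = (c.re • p.1 - c.im • p.2, c.im • p.1 + c.re • p.2) := rfl

abbrev pairModule : Module ℂ (E × E) where
  one_smul p := by simp [pair_smul_def]
  mul_smul c d p := by
    simp only [pair_smul_def, Complex.mul_re, Complex.mul_im, Prod.mk.injEq]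
    constructor <;> module
  smul_zero c := by simp [pair_smul_def]
  smul_add c p q := by
    simp only [pair_smul_def, Prod.fst_add, Prod.snd_add, Prod.mk_add_mk, Prod.mk.injEq]
    constructor <;> module
  add_smul c d p := by
    simp only [pair_smul_def, Complex.add_re, Complex.add_im, Prod.mk_add_mk, Prod.mk.injEq]
    constructor <;> module
  zero_smul p := by simp [pair_smul_def]

attribute [local instance] pairModule

def lmulC {k l p : ℕ} (A : Matrix (Fin k) (Fin l) ℂ) (X : Matrix (Fin l) (Fin p) (E × E)) :
    Matrix (Fin k) (Fin p) (E × E) :=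
  Matrix.of fun i j => ∑ t, A i t • X t j

def rmulC {k l p : ℕ} (X : Matrix (Fin k) (Fin l) (E × E)) (A : Matrix (Fin l) (Fin p) ℂ) :
    Matrix (Fin k) (Fin p) (E × E) :=
  Matrix.of fun i j => ∑ t, A t j • X i t

theorem lmulC_apply {k l p : ℕ} (A : Matrix (Fin k) (Fin l) ℂ)
    (X : Matrix (Fin l) (Fin p) (E × E)) (i : Fin k) (j : Fin p) :
    lmulC A X i j = ∑ t, A i t • X t j := rfl

theorem rmulC_apply {k l p : ℕ} (X : Matrix (Fin k) (Fin l) (E × E))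
    (A : Matrix (Fin l) (Fin p) ℂ) (i : Fin k) (j : Fin p) :
    rmulC X A i j = ∑ t, A t j • X i t := rfl

theorem lmulC_lmulC {k l p q : ℕ} (A : Matrix (Fin k) (Fin l) ℂ) (B : Matrix (Fin l) (Fin p) ℂ)
    (X : Matrix (Fin p) (Fin q) (E × E)) : lmulC A (lmulC B X) = lmulC (A * B) X := by
  ext i j : 1
  simp only [lmulC_apply, Matrix.mul_apply, Finset.smul_sum, Finset.sum_smul, smul_smul]
  exact Finset.sum_comm

theorem rmulC_rmulC {k l p q : ℕ} (X : Matrix (Fin k) (Fin l) (E × E))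
    (A : Matrix (Fin l) (Fin p) ℂ) (B : Matrix (Fin p) (Fin q) ℂ) :
    rmulC (rmulC X A) B = rmulC X (A * B) := by
  ext i j : 1
  simp only [rmulC_apply, Matrix.mul_apply, Finset.smul_sum, Finset.sum_smul, smul_smul,
    mul_comm (B _ j)]
  exact Finset.sum_comm

theorem lmulC_rmulC {k l p q : ℕ} (A : Matrix (Fin k) (Fin l) ℂ)
    (X : Matrix (Fin l) (Fin p) (E × E)) (B : Matrix (Fin p) (Fin q) ℂ) :
    lmulC A (rmulC X B) = rmulC (lmulC A X) B := by
  ext i j : 1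
  simp only [lmulC_apply, rmulC_apply, Finset.smul_sum, smul_smul, mul_comm (A i _)]
  exact Finset.sum_comm

theorem lmulC_one {k p : ℕ} (X : Matrix (Fin k) (Fin p) (E × E)) : lmulC 1 X = X := by
  ext i j : 1
  simp [lmulC_apply, Matrix.one_apply, ite_smul]

theorem rmulC_one {k p : ℕ} (X : Matrix (Fin k) (Fin p) (E × E)) : rmulC X 1 = X := by
  ext i j : 1
  simp [rmulC_apply, Matrix.one_apply, ite_smul]

def compressPair {k l : ℕ} (γ : Matrix (Fin k) (Fin l) ℂ) (X : Matrix (Fin k) (Fin k) (E × E)) :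
    Matrix (Fin l) (Fin l) (E × E) :=
  lmulC γᴴ (rmulC X γ)

theorem compressPair_compressPair {k l p : ℕ} (γ : Matrix (Fin k) (Fin l) ℂ)
    (δ : Matrix (Fin l) (Fin p) ℂ) (X : Matrix (Fin k) (Fin k) (E × E)) :
    compressPair δ (compressPair γ X) = compressPair (γ * δ) X := by
  simp only [compressPair, lmulC_rmulC, lmulC_lmulC, rmulC_rmulC, Matrix.conjTranspose_mul]

theorem lmulC_conj_eq_rmulC_conj {M : ℕ} {S : Matrix (Fin M) (Fin M) ℂ} (hS : Sᴴ * S = 1)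
    {P : Matrix (Fin M) (Fin M) ℂ} {X : Matrix (Fin M) (Fin M) (E × E)}
    (h : lmulC P (compressPair S X) = rmulC (compressPair S X) P) :
    lmulC (S * P * Sᴴ) X = rmulC X (S * P * Sᴴ) := by
  have hS' : S * Sᴴ = 1 := mul_eq_one_comm.mp hS
  set C := compressPair S X with hC
  have hX : X = lmulC S (rmulC C Sᴴ) := by
    rw [hC, compressPair, ← lmulC_rmulC, rmulC_rmulC, hS', rmulC_one, lmulC_lmulC, hS', lmulC_one]
  calc lmulC (S * P * Sᴴ) X
      = lmulC S (rmulC (lmulC P C) Sᴴ) := by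
        rw [hX, lmulC_lmulC, Matrix.mul_assoc, hS, Matrix.mul_one, ← lmulC_lmulC, lmulC_rmulC]
    _ = lmulC S (rmulC (rmulC C P) Sᴴ) := by rw [h]
    _ = rmulC X (S * P * Sᴴ) := by
        rw [hX, rmulC_rmulC, ← lmulC_rmulC, rmulC_rmulC, ← Matrix.mul_assoc Sᴴ,
          ← Matrix.mul_assoc Sᴴ, hS, Matrix.one_mul]

theorem lmulC_complexMat_pairMat {k l p : ℕ} (a b : Matrix (Fin k) (Fin l) ℝ)
    (z w : Matrix (Fin l) (Fin p) E) :
    lmulC (complexMat a b) (pairMat z w) = pairMat (lmul a z - lmul b w) (lmul b z + lmul a w) := by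
  ext i j : 1
  refine Prod.ext ?_ ?_ <;>
  simp only [lmulC_apply, complexMat, pairMat, lmul, Matrix.of_apply, Matrix.sub_apply,
    Matrix.add_apply, pair_smul_def, Prod.fst_sum, Prod.snd_sum, Finset.sum_sub_distrib,
    Finset.sum_add_distrib]

theorem rmulC_pairMat_complexMat {k l p : ℕ} (z w : Matrix (Fin k) (Fin l) E)
    (a b : Matrix (Fin l) (Fin p) ℝ) :
    rmulC (pairMat z w) (complexMat a b) =
      pairMat (rmulE z a - rmulE w b) (rmulE z b + rmulE w a) := by
  ext i j : 1
  refine Prod.ext ?_ ?_ <;>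
  simp only [rmulC_apply, complexMat, pairMat, rmulE, Matrix.of_apply, Matrix.sub_apply,
    Matrix.add_apply, pair_smul_def, Prod.fst_sum, Prod.snd_sum, Finset.sum_sub_distrib,
    Finset.sum_add_distrib]

theorem ccommC_iff {m : ℕ} (pr pim : Matrix (Fin m) (Fin m) ℝ) (z w : Matrix (Fin m) (Fin m) E) :
    CCommC pr pim z w ↔
      lmulC (complexMat pr pim) (pairMat z w) = rmulC (pairMat z w) (complexMat pr pim) := by
  rw [lmulC_complexMat_pairMat, rmulC_pairMat_complexMat, pairMat_inj, CCommC,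
    add_comm (lmul pim z), add_comm (rmulE z pim)]

theorem pairMat_compressC {m n : ℕ} (a b : Matrix (Fin m) (Fin n) ℝ)
    (z w : Matrix (Fin m) (Fin m) E) :
    pairMat (compressC a b z w).1 (compressC a b z w).2 =
      compressPair (complexMat a b) (pairMat z w) := by
  ext i j : 1
  refine Prod.ext ?_ ?_ <;>
  · simp only [compressC, compressPair, pairMat, lmulC_apply, rmulC_apply, complexMat, lmul,
      rmulE, Matrix.conjTranspose_apply, Matrix.of_apply, Matrix.add_apply, Matrix.sub_apply,
      pair_smul_def, Prod.fst_sum, Prod.snd_sum, Matrix.transpose_apply, Complex.star_def,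
      Complex.conj_re, Complex.conj_im, smul_sub, smul_add, Finset.smul_sum,
      neg_smul, Finset.sum_sub_distrib, Finset.sum_add_distrib, sub_neg_eq_add,
      Finset.sum_neg_distrib]
    abel

theorem compressC_compressC {k l p : ℕ} (a b : Matrix (Fin k) (Fin l) ℝ)
    (c d : Matrix (Fin l) (Fin p) ℝ) (z w : Matrix (Fin k) (Fin k) E) :
    compressC c d (compressC a b z w).1 (compressC a b z w).2 =
      compressC (a * c - b * d) (a * d + b * c) z w := by
  rw [Prod.ext_iff, ← pairMat_inj, pairMat_compressC, pairMat_compressC, pairMat_compressC,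
    compressPair_compressPair, complexMat_mul]

/-- The two matrices in the conclusion are the real and imaginary parts of
`(p + i q) r (p + i q)*`. -/
theorem CCommC.of_compressC {m : ℕ} {p q : Matrix (Fin m) (Fin m) ℝ} (hpq : IsCIsometry p q)
    {r : Matrix (Fin m) (Fin m) ℝ} {z w : Matrix (Fin m) (Fin m) E}
    (h : CCommC r 0 (compressC p q z w).1 (compressC p q z w).2) :
    CCommC (p * r * pᵀ + q * r * qᵀ) (q * r * pᵀ - p * r * qᵀ) z w := by
  rw [isCIsometry_iff] at hpq
  rw [ccommC_iff, pairMat_compressC] at h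
  have hconj : complexMat p q * complexMat r 0 * (complexMat p q)ᴴ =
      complexMat (p * r * pᵀ + q * r * qᵀ) (q * r * pᵀ - p * r * qᵀ) := by
    rw [complexMat_conjTranspose, complexMat_mul, complexMat_mul]
    congr 1 <;> simp only [Matrix.mul_zero, Matrix.mul_neg, sub_zero, zero_add, sub_neg_eq_add,
      neg_add_eq_sub]
  rw [ccommC_iff, ← hconj]
  exact lmulC_conj_eq_rmulC_conj hpq h

end ComplexPairs

section Realification

theorem sum_fin_add_self {α : Type*} [AddCommMonoid α] {m : ℕ} (f : Fin (m + m) → α) :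
    ∑ i, f i = ∑ i, f (inL i) + ∑ i, f (inR i) :=
  Fin.sum_univ_add f

theorem cases_inL_inR {m : ℕ} (i : Fin (m + m)) : (∃ p, i = inL p) ∨ ∃ p, i = inR p := by
  obtain ⟨s | s, rfl⟩ := finSumFinEquiv.surjective i
  exacts [.inl ⟨s, rfl⟩, .inr ⟨s, rfl⟩]

section BlockEntries

variable {α : Type*} {k l : ℕ} (A B C D : Matrix (Fin k) (Fin l) α) (i : Fin k) (j : Fin l)

@[simp] theorem reindex_fromBlocks_inL_inL :
    Matrix.reindex finSumFinEquiv finSumFinEquiv (Matrix.fromBlocks A B C D) (inL i) (inL j) =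
      A i j := by
  simp only [inL, Matrix.reindex_apply, Matrix.submatrix_apply, Equiv.symm_apply_apply,
    Matrix.fromBlocks_apply₁₁]

@[simp] theorem reindex_fromBlocks_inL_inR :
    Matrix.reindex finSumFinEquiv finSumFinEquiv (Matrix.fromBlocks A B C D) (inL i) (inR j) =
      B i j := by
  simp only [inL, inR, Matrix.reindex_apply, Matrix.submatrix_apply, Equiv.symm_apply_apply,
    Matrix.fromBlocks_apply₁₂]

@[simp] theorem reindex_fromBlocks_inR_inL :
    Matrix.reindex finSumFinEquiv finSumFinEquiv (Matrix.fromBlocks A B C D) (inR i) (inL j) =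
      C i j := by
  simp only [inL, inR, Matrix.reindex_apply, Matrix.submatrix_apply, Equiv.symm_apply_apply,
    Matrix.fromBlocks_apply₂₁]

@[simp] theorem reindex_fromBlocks_inR_inR :
    Matrix.reindex finSumFinEquiv finSumFinEquiv (Matrix.fromBlocks A B C D) (inR i) (inR j) =
      D i j := by
  simp only [inR, Matrix.reindex_apply, Matrix.submatrix_apply, Equiv.symm_apply_apply,
    Matrix.fromBlocks_apply₂₂]

end BlockEntries

/-- The paper's `c(p + i q)` for rectangular real `p, q`. -/
def cBlock {k l : ℕ} (p q : Matrix (Fin k) (Fin l) ℝ) : Matrix (Fin (k + k)) (Fin (l + l)) ℝ :=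
  Matrix.reindex finSumFinEquiv finSumFinEquiv (Matrix.fromBlocks p (-q) q p)

theorem isIsometry_cBlock {k l : ℕ} {p q : Matrix (Fin k) (Fin l) ℝ} (h : IsCIsometry p q) :
    IsIsometry (cBlock p q) := by
  obtain ⟨h₁, h₂⟩ := h
  rw [IsIsometry, cBlock, Matrix.transpose_reindex, Matrix.reindex_apply, Matrix.reindex_apply,
    Matrix.submatrix_mul_equiv, Matrix.fromBlocks_transpose, Matrix.fromBlocks_multiply]
  rw [← Matrix.submatrix_one_equiv finSumFinEquiv.symm, ← Matrix.fromBlocks_one]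
  congr 2
  · rw [Matrix.mul_neg, neg_add_eq_sub, ← neg_sub, h₂, neg_zero]
  · rw [Matrix.transpose_neg, Matrix.neg_mul, neg_add_eq_sub, h₂]
  · rw [Matrix.transpose_neg, Matrix.neg_mul, Matrix.mul_neg, neg_neg, add_comm, h₁]

variable {E : Type*} [AddCommGroup E] [Module ℝ E]

theorem compress_cBlock_cMat {k l : ℕ} (p q : Matrix (Fin k) (Fin l) ℝ)
    (u v : Matrix (Fin k) (Fin k) E) :
    compress (cBlock p q) (cMat u v) = cMat (compressC p q u v).1 (compressC p q u v).2 := by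
  ext I J : 1
  rcases cases_inL_inR I with ⟨i, rfl⟩ | ⟨i, rfl⟩ <;>
    rcases cases_inL_inR J with ⟨j, rfl⟩ | ⟨j, rfl⟩ <;>
  · simp only [compress, lmul, rmulE, compressC, cBlock, cMat, Matrix.of_apply,
      Matrix.transpose_apply, Matrix.add_apply, Matrix.sub_apply, Matrix.neg_apply,
      sum_fin_add_self, reindex_fromBlocks_inL_inL, reindex_fromBlocks_inL_inR,
      reindex_fromBlocks_inR_inL, reindex_fromBlocks_inR_inR, smul_add, smul_sub, smul_neg,
      neg_smul, Finset.smul_sum, Finset.sum_add_distrib, Finset.sum_sub_distrib,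
      Finset.sum_neg_distrib, neg_neg]
    abel

theorem cMat_compressC_mem (K : NCConvexSet E) {k l : ℕ} {p q : Matrix (Fin k) (Fin l) ℝ}
    (h : IsCIsometry p q) {u v : Matrix (Fin k) (Fin k) E} (hm : cMat u v ∈ K.level (k + k)) :
    cMat (compressC p q u v).1 (compressC p q u v).2 ∈ K.level (l + l) := by
  rw [← compress_cBlock_cMat]
  exact K.compress_mem _ (isIsometry_cBlock h) hm

end Realification

theorem orthonormal_toLp_transpose_iff {m ι : Type*} [Fintype m] [DecidableEq ι]
    (A : Matrix m ι ℂ) : Orthonormal ℂ (fun k => WithLp.toLp 2 (Aᵀ k)) ↔ Aᴴ * A = 1 := by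
  rw [orthonormal_iff_ite, ← Matrix.ext_iff]
  refine forall₂_congr fun k l => ?_
  simp only [EuclideanSpace.inner_toLp_toLp, Matrix.mul_apply, Matrix.one_apply, dotProduct,
    Matrix.transpose_apply, Matrix.conjTranspose_apply, Pi.star_apply, mul_comm]

theorem exists_unitary_mul_map_ofReal_eq {M n : ℕ} {δ : Matrix (Fin M) (Fin n) ℂ}
    (hδ : δᴴ * δ = 1) :
    ∃ (S : Matrix (Fin M) (Fin M) ℂ) (α : Matrix (Fin M) (Fin n) ℝ),
      Sᴴ * S = 1 ∧ IsIsometry α ∧ S * α.map Complex.ofReal = δ := by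
  have hcols := (orthonormal_toLp_transpose_iff δ).2 hδ
  have hn : n ≤ M := by
    simpa [finrank_euclideanSpace_fin] using hcols.linearIndependent.fintype_card_le_finrank
  let v : Fin M → EuclideanSpace ℂ (Fin M) := fun k =>
    if h : (k : ℕ) < n then WithLp.toLp 2 (δᵀ ⟨k, h⟩) else 0
  let s : Set (Fin M) := {k | (k : ℕ) < n}
  have hv : Orthonormal ℂ (s.domRestrict v) := by
    have hinj : Function.Injective (fun k : s => (⟨k, k.2⟩ : Fin n)) := fun k l h => by
      ext; simpa using congrArg Fin.val h
    convert hcols.comp _ hinj using 1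
    funext k
    simp [v, show ((k : Fin M) : ℕ) < n from k.2]
  obtain ⟨b, hb⟩ := hv.exists_orthonormalBasis_extension_of_card_eq (by simp)
  refine ⟨Matrix.of fun i k => b k i, (1 : Matrix (Fin M) (Fin M) ℝ).submatrix id (Fin.castLE hn),
    ?_, ?_, ?_⟩
  · rw [← orthonormal_toLp_transpose_iff]
    exact b.orthonormal
  · rw [IsIsometry, Matrix.transpose_submatrix, Matrix.transpose_one,
      ← Matrix.submatrix_mul _ _ _ _ _ Function.bijective_id, Matrix.one_mul]
    exact Matrix.submatrix_one _ (Fin.castLE_injective hn)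
  · ext i j
    have hj : Fin.castLE hn j ∈ s := j.2
    rw [Matrix.mul_apply]
    simp [Matrix.one_apply, apply_ite Complex.ofReal, hb _ hj, v]

theorem IsCIsometry.exists_unitary_mul_isometry {m n : ℕ} {a b : Matrix (Fin m) (Fin n) ℝ}
    (h : IsCIsometry a b) :
    ∃ (p q : Matrix (Fin m) (Fin m) ℝ) (α : Matrix (Fin m) (Fin n) ℝ),
      IsCIsometry p q ∧ IsIsometry α ∧ p * α = a ∧ q * α = b := by
  obtain ⟨S, α, hS, hα, hSα⟩ := exists_unitary_mul_map_ofReal_eq ((isCIsometry_iff a b).1 h)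
  refine ⟨S.map Complex.re, S.map Complex.im, α, ?_, hα, ?_⟩
  · rwa [isCIsometry_iff, complexMat_map_re_map_im]
  · rwa [← complexMat_zero_right, ← complexMat_map_re_map_im S, complexMat_mul, Matrix.mul_zero,
      Matrix.mul_zero, sub_zero, zero_add, complexMat_inj] at hSα

theorem complex_maximal_iff_real_maximal_in_complexification_general
    (E : Type) [AddCommGroup E] [Module ℝ E]
    (K : NCConvexSet E) {n : ℕ}
    (x y : Matrix (Fin n) (Fin n) E) :
    IsCMaxInC K x y ↔ IsRMaxInC K x y := by
  refine ⟨fun hC m z w α hm hα hzw => ?_, fun hR m z w a b hm hab hzw => ?_⟩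
  · simpa using hC z w α 0 hm (isCIsometry_zero_iff.2 hα) hzw
  · obtain ⟨p, q, α, hpq, hα, rfl, rfl⟩ := hab.exists_unitary_mul_isometry
    have hdil : compressC α 0 (compressC p q z w).1 (compressC p q z w).2 = (x, y) := by
      simpa [compressC_compressC] using hzw
    have := (hR _ _ α (cMat_compressC_mem K hpq hm) hα hdil).of_compressC hpq
    simpa [Matrix.mul_assoc, Matrix.transpose_mul] using this

/-- For `K` a real compact nc convex set, an element of the
complexification `K_c` is complex maximal in `K_c` if and only if it is real
maximal in `K_c`. -/
theorem complex_maximal_iff_real_maximal_in_complexification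
    (E : Type) [AddCommGroup E] [Module ℝ E] [TopologicalSpace E]
    (K : NCConvexSet E) (hK : K.IsCompactSet) {n : ℕ}
    (x y : Matrix (Fin n) (Fin n) E) (hmem : cMat x y ∈ K.level (n + n)) :
    IsCMaxInC K x y ↔ IsRMaxInC K x y :=
  complex_maximal_iff_real_maximal_in_complexification_general E K x y

end NCC
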